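/- arXiv:1902.06143 — 2 statements merged into one kernel-verified Lean document; each statement's English description precedes it below -/
import Mathlib

section
/- Let W be a real symmetric n×n matrix with exactly two distinct eigenvalues, and let X be any real n×k matrix. Then the n×3k block matrix [WX | W²X | X] has rank at most 2k; in particular, if k ≥ 1 it does not have full column rank. -/
/-!
A symmetric real `W` is self-adjoint, so by the functional calculus the polynomial
`(x - τ₁)(x - τ₂)`, which vanishes on its spectrum `{τ₁, τ₂}`, annihilates it:
`W² = (τ₁ + τ₂) W - τ₁ τ₂`. Hence `W²X = (τ₁ + τ₂) WX - τ₁ τ₂ X`, the middle block lies in the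
column span of `[WX | X]`, and the rank of `[WX | W²X | X]` is at most `2k`.
-/

open Matrix Polynomial

theorem aeval_eq_zero_of_eval_eq_zero_on_spectrum {R A : Type*} {p : A → Prop} [CommSemiring R]
    [StarRing R] [MetricSpace R] [IsTopologicalSemiring R] [ContinuousStar R] [TopologicalSpace A]
    [Ring A] [StarRing A] [Algebra R A] [ContinuousFunctionalCalculus R A p]
    {a : A} (ha : p a) (q : R[X]) (hq : ∀ x ∈ spectrum R a, q.eval x = 0) :
    aeval a q = 0 := by
  rw [← cfc_polynomial q a ha, cfc_congr (g := 0) hq, cfc_zero]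

theorem IsSelfAdjoint.sq_eq_of_spectrum_subset_pair {A : Type*} [TopologicalSpace A] [Ring A]
    [StarRing A] [Algebra ℝ A] [ContinuousFunctionalCalculus ℝ A IsSelfAdjoint]
    {a : A} (ha : IsSelfAdjoint a) {s t : ℝ} (hspec : spectrum ℝ a ⊆ {s, t}) :
    a ^ 2 = (s + t) • a - algebraMap ℝ A (s * t) := by
  have hq := aeval_eq_zero_of_eval_eq_zero_on_spectrum ha (X ^ 2 - C (s + t) * X + C (s * t))
    fun x hx => by rcases hspec hx with rfl | rfl <;> simp <;> ring
  rw [map_add, map_sub, map_mul, map_pow, aeval_X, aeval_C, aeval_C] at hq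
  rw [Algebra.smul_def, ← sub_eq_zero, ← hq]
  abel

theorem Matrix.rank_fromCols_fromCols_add_mul_le {m n p R : Type*} [Fintype m] [Fintype n]
    [Fintype p] [DecidableEq n] [DecidableEq p] [CommSemiring R] [StrongRankCondition R]
    (A : Matrix m n R) (B : Matrix m p R) (P : Matrix n n R) (Q : Matrix p n R) :
    (fromCols (fromCols A (A * P + B * Q)) B).rank ≤ (fromCols A B).rank := by
  have hfactor : fromCols (fromCols A (A * P + B * Q)) B =
      fromCols A B * fromCols (fromCols (fromRows 1 0) (fromRows P Q)) (fromRows 0 1) := by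
    simp only [mul_fromCols, fromCols_mul_fromRows, Matrix.mul_one, Matrix.mul_zero, add_zero,
      zero_add]
  rw [hfactor]
  exact rank_mul_le_left _ _

theorem stmt3_general {n k : ℕ} (W : Matrix (Fin n) (Fin n) ℝ) (hW : W.IsSymm)
    (τ₁ τ₂ : ℝ) (hspec : spectrum ℝ W = {τ₁, τ₂})
    (X : Matrix (Fin n) (Fin k) ℝ) :
    (Matrix.fromCols (Matrix.fromCols (W * X) (W ^ 2 * X)) X).rank ≤ 2 * k ∧
      (1 ≤ k →
        (Matrix.fromCols (Matrix.fromCols (W * X) (W ^ 2 * X)) X).rank ≠ 3 * k) := by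
  have hW2 : W ^ 2 = (τ₁ + τ₂) • W - algebraMap ℝ (Matrix (Fin n) (Fin n) ℝ) (τ₁ * τ₂) :=
    IsSelfAdjoint.sq_eq_of_spectrum_subset_pair (isHermitian_iff_isSymm.mpr hW) hspec.subset
  have hW2X : W ^ 2 * X = W * X * ((τ₁ + τ₂) • (1 : Matrix (Fin k) (Fin k) ℝ)) +
      X * (-(τ₁ * τ₂) • (1 : Matrix (Fin k) (Fin k) ℝ)) := by
    rw [hW2, Algebra.algebraMap_eq_smul_one, Matrix.sub_mul, Matrix.smul_mul, Matrix.smul_mul,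
      Matrix.one_mul, Matrix.mul_smul, Matrix.mul_one, Matrix.mul_smul, Matrix.mul_one, neg_smul,
      sub_eq_add_neg]
  have hrank : (fromCols (fromCols (W * X) (W ^ 2 * X)) X).rank ≤ 2 * k := by
    rw [hW2X]
    calc _ ≤ (fromCols (W * X) X).rank := rank_fromCols_fromCols_add_mul_le _ _ _ _
      _ ≤ Fintype.card (Fin k ⊕ Fin k) := rank_le_card_width _
      _ = 2 * k := by simp [two_mul]
  exact ⟨hrank, fun hk _ => by omega⟩

/-- If a real symmetric `n × n` matrix `W` has exactly two distinct eigenvalues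
`τ₁ ≠ τ₂` and `X` is any real `n × k` matrix, then the block matrix
`[WX | W²X | X]` has rank at most `2 * k`; in particular, when `k ≥ 1` it fails
to have full column rank `3 * k`. -/
theorem stmt3 {n k : ℕ} (W : Matrix (Fin n) (Fin n) ℝ) (hW : W.IsSymm)
    (τ₁ τ₂ : ℝ) (hτ : τ₁ ≠ τ₂) (hspec : spectrum ℝ W = {τ₁, τ₂})
    (X : Matrix (Fin n) (Fin k) ℝ) :
    (Matrix.fromCols (Matrix.fromCols (W * X) (W ^ 2 * X)) X).rank ≤ 2 * k ∧
      (1 ≤ k →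
        (Matrix.fromCols (Matrix.fromCols (W * X) (W ^ 2 * X)) X).rank ≠ 3 * k) :=
  stmt3_general W hW τ₁ τ₂ hspec X
end

section
/- Let m ≥ 2 be an integer, W = W_m = (1/(m−1))(ιι^T − I), J = I − (1/m)ιι^T, and let λ, β₁, β₂, γ be real numbers with I − λW invertible. Suppose the vectors Y, X₁, X₂, ε ∈ ℝ^m satisfy the structural equation Y = λ·W·Y + β₁·X₁ + β₂·W·X₂ + γ·ι + ε. Then the within-transformed reduced form holds: J·Y = ((m−1)β₁/(m−1+λ))·J·X₁ − (β₂/(m−1+λ))·J·X₂ + ((m−1)/(m−1+λ))·J·ε. -/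
open Matrix

/-!
Since `W = (ιιᵀ - I)/(m-1)` and `J` annihilates `ι`, we have `J W = -J/(m-1)`, so applying `J`
to the structural equation kills the fixed effect and leaves the scalar equation
`(1 + λ/(m-1)) J Y = β₁ J X₁ - β₂/(m-1) J X₂ + J ε`. Its coefficient is nonzero because every
vector with zero sum is an eigenvector of `I - λW` with eigenvalue `(m-1+λ)/(m-1)`, and
`I - λW` is invertible.
-/

/-- The group-interaction matrix `W_m = (1/(m-1))(ιιᵀ - I)`. -/
noncomputable def groupMat (m : ℕ) : Matrix (Fin m) (Fin m) ℝ :=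
  Matrix.of fun i j => if i = j then 0 else 1 / ((m : ℝ) - 1)

/-- The deviation-from-group-mean projector `J_m = I - (1/m) ιιᵀ`. -/
noncomputable def groupProj (m : ℕ) : Matrix (Fin m) (Fin m) ℝ :=
  1 - ((m : ℝ))⁻¹ • Matrix.of (fun _ _ => (1 : ℝ))

theorem Matrix.ne_zero_of_isUnit_of_mulVec_eq_smul {n K : Type*} [Fintype n] [DecidableEq n]
    [Field K] {A : Matrix n n K} (hA : IsUnit A) {v : n → K} (hv : v ≠ 0) {c : K}
    (h : A *ᵥ v = c • v) : c ≠ 0 := by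
  rintro rfl
  exact hv (mulVec_injective_iff_isUnit.2 hA (by rw [h, zero_smul, mulVec_zero]))

lemma Matrix.of_const_one_mulVec {n R : Type*} [Fintype n] [NonAssocSemiring R] (v : n → R) :
    (of fun _ _ => (1 : R) : Matrix n n R) *ᵥ v = fun _ => ∑ j, v j := by
  ext i; simp [mulVec, dotProduct]

lemma groupMat_eq_smul (m : ℕ) :
    groupMat m = ((m : ℝ) - 1)⁻¹ • (of (fun _ _ => (1 : ℝ)) - 1) := by
  ext i j
  by_cases h : i = j <;> simp [groupMat, h, one_apply]

lemma groupMat_mulVec_of_sum_eq_zero (m : ℕ) {v : Fin m → ℝ} (hv : ∑ i, v i = 0) :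
    groupMat m *ᵥ v = -((m : ℝ) - 1)⁻¹ • v := by
  rw [groupMat_eq_smul, smul_mulVec, sub_mulVec, of_const_one_mulVec, hv, one_mulVec]
  ext i
  simp

lemma cast_sub_one_ne_zero {m : ℕ} (hm : 2 ≤ m) : (m : ℝ) - 1 ≠ 0 := by
  have : (2 : ℝ) ≤ m := by exact_mod_cast hm
  linarith

lemma sub_one_add_ne_zero_of_isUnit {m : ℕ} (hm : 2 ≤ m) {lam : ℝ}
    (hinv : IsUnit (1 - lam • groupMat m)) : (m : ℝ) - 1 + lam ≠ 0 := by
  set v : Fin m → ℝ := Pi.single ⟨0, by omega⟩ 1 - Pi.single ⟨1, by omega⟩ 1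
  have hv : v ≠ 0 := fun h => by
    simpa [v, Pi.single_apply, Fin.ext_iff] using congrFun h ⟨0, by omega⟩
  have hsum : ∑ i, v i = 0 := by simp [v]
  have hm1 := cast_sub_one_ne_zero hm
  have heig :
      (1 - lam • groupMat m) *ᵥ v = (((m : ℝ) - 1 + lam) / ((m : ℝ) - 1)) • v := by
    rw [sub_mulVec, one_mulVec, smul_mulVec, groupMat_mulVec_of_sum_eq_zero m hsum]
    ext i
    simp only [Pi.sub_apply, Pi.smul_apply, smul_eq_mul]
    field_simp
    ring
  exact left_ne_zero_of_mul (Matrix.ne_zero_of_isUnit_of_mulVec_eq_smul hinv hv heig)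

lemma groupProj_mul_of_const_one (m : ℕ) [NeZero m] :
    groupProj m * of (fun _ _ => (1 : ℝ)) = 0 := by
  have : (of fun _ _ => (1 : ℝ) : Matrix (Fin m) (Fin m) ℝ) * of (fun _ _ => 1)
      = (m : ℝ) • of (fun _ _ => 1) := by
    ext i j; simp [mul_apply]
  rw [groupProj, sub_mul, one_mul, smul_mul_assoc, this, smul_smul,
    inv_mul_cancel₀ (Nat.cast_ne_zero.2 (NeZero.ne m)), one_smul, sub_self]

lemma groupProj_mul_groupMat (m : ℕ) [NeZero m] :
    groupProj m * groupMat m = -((m : ℝ) - 1)⁻¹ • groupProj m := by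
  rw [groupMat_eq_smul, mul_smul_comm, mul_sub, groupProj_mul_of_const_one, mul_one, zero_sub,
    smul_neg, neg_smul]

lemma groupProj_mulVec_const (m : ℕ) [NeZero m] (c : ℝ) :
    groupProj m *ᵥ (fun _ => c) = 0 := by
  have : (fun _ => c : Fin m → ℝ) = of (fun _ _ => (1 : ℝ)) *ᵥ Pi.single (0 : Fin m) c := by
    rw [of_const_one_mulVec]; simp
  rw [this, mulVec_mulVec, groupProj_mul_of_const_one, zero_mulVec]

/-- If `Y = λ W Y + β₁ X₁ + β₂ W X₂ + γ ι + ε` in a group of size `m ≥ 2` with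
`I - λ W` invertible, then the within-transformed reduced form holds:
`J Y = ((m-1)β₁/(m-1+λ)) J X₁ - (β₂/(m-1+λ)) J X₂ + ((m-1)/(m-1+λ)) J ε`. -/
theorem stmt9 {m : ℕ} (hm : 2 ≤ m) (lam β₁ β₂ γ : ℝ)
    (hinv : IsUnit (1 - lam • groupMat m))
    (Y X₁ X₂ ε : Fin m → ℝ)
    (hstruct : Y = lam • (groupMat m *ᵥ Y) + β₁ • X₁ +
      β₂ • (groupMat m *ᵥ X₂) + γ • (fun _ => (1 : ℝ)) + ε) :
    groupProj m *ᵥ Y =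
      (((m : ℝ) - 1) * β₁ / ((m : ℝ) - 1 + lam)) • (groupProj m *ᵥ X₁) -
        (β₂ / ((m : ℝ) - 1 + lam)) • (groupProj m *ᵥ X₂) +
        (((m : ℝ) - 1) / ((m : ℝ) - 1 + lam)) • (groupProj m *ᵥ ε) := by
  have : NeZero m := ⟨by omega⟩
  have hm1 := cast_sub_one_ne_zero hm
  have hden := sub_one_add_ne_zero_of_isUnit hm hinv
  have hJ := congrArg (groupProj m *ᵥ ·) hstruct
  simp only [mulVec_add, mulVec_smul, mulVec_mulVec, groupProj_mul_groupMat, smul_mulVec,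
    groupProj_mulVec_const, smul_zero, add_zero] at hJ
  ext i
  have hJi := congrFun hJ i
  simp only [Pi.add_apply, Pi.sub_apply, Pi.smul_apply, smul_eq_mul] at hJi ⊢
  field_simp at hJi ⊢
  linarith
end
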